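/- Let p, m ≥ 1 be integers and let Q ∈ ℝ^{p×m} be a matrix with rank Q = p. If L, L̃ ∈ ℝ^{m×m} are lower unitriangular matrices and Q⁰ := QL and Q̃⁰ := QL̃ are both in canonical form, then Q⁰ = Q̃⁰. -/

import Mathlib

/-- A matrix `L` is lower unitriangular if `L i j = 0` whenever `i < j`
and `L i i = 1` for every `i`. -/
def IsLowerUnitriangular {m : ℕ} (L : Matrix (Fin m) (Fin m) ℝ) : Prop :=
  (∀ i j : Fin m, i < j → L i j = 0) ∧ ∀ i : Fin m, L i i = 1

/-- `Q` is in canonical form with witnessing (distinct) column indices `c 1, …, c p`: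
for every row `i`, the entry `Q i (c i)` is nonzero, the entries `Q i j` vanish
for `j > c i` with `j ∉ {c (i+1), …, c p}`, and the entries `Q i j` vanish
for `j < c i`. -/
def IsCanonicalFormWith {p m : ℕ} (Q : Matrix (Fin p) (Fin m) ℝ) (c : Fin p → Fin m) : Prop :=
  Function.Injective c ∧
    ∀ i : Fin p,
      Q i (c i) ≠ 0 ∧
      (∀ j : Fin m, c i < j → (∀ k : Fin p, i < k → j ≠ c k) → Q i j = 0) ∧
      (∀ j : Fin m, j < c i → Q i j = 0)

/-- `Q` is in canonical form. -/
def IsCanonicalForm {p m : ℕ} (Q : Matrix (Fin p) (Fin m) ℝ) : Prop :=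
  ∃ c : Fin p → Fin m, IsCanonicalFormWith Q c

/-!
With `N := L'⁻¹ * L`, again lower unitriangular, `Q * L = (Q * L') * N`: each column `j` of
`A := Q * L` is column `j` of `B := Q * L'` plus a combination of the later columns of `B`.
Compare the columns from right to left. A column of `B` through the pivot of row `s` that
reappears in the canonical form `A` must be the pivot column of row `s` there as well. So if the
columns after `j` agree, then for each pivot `c' s > j`, taken from the last row upwards, the
entry `A s j` vanishes (it lies left of the pivot of row `s`) and equals `B s (c' s) * N (c' s) j`;
hence `N (c' s) j = 0`, and column `j` of `A` equals column `j` of `B`.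
-/

open Finset

namespace Matrix

theorem IsLowerTriangular.mul_apply_self {n R : Type*} [Fintype n] [LinearOrder n]
    [NonUnitalNonAssocSemiring R] {X Y : Matrix n n R} (hX : X.IsLowerTriangular)
    (hY : Y.IsLowerTriangular) (i : n) : (X * Y) i i = X i i * Y i i := by
  rw [Matrix.mul_apply]
  refine Fintype.sum_eq_single i fun k hk => ?_
  rcases hk.lt_or_gt with hki | hik
  · rw [hY (show OrderDual.toDual i < OrderDual.toDual k from hki), mul_zero]
  · rw [hX (show OrderDual.toDual k < OrderDual.toDual i from hik), zero_mul]

end Matrix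

namespace IsLowerUnitriangular

variable {m : ℕ} {L N : Matrix (Fin m) (Fin m) ℝ}

theorem isLowerTriangular (hL : IsLowerUnitriangular L) : L.IsLowerTriangular :=
  fun i j hij => hL.1 i j hij

theorem det_eq_one (hL : IsLowerUnitriangular L) : L.det = 1 := by
  simp [Matrix.det_of_isLowerTriangular L hL.isLowerTriangular, hL.2]

theorem mul (hL : IsLowerUnitriangular L) (hN : IsLowerUnitriangular N) :
    IsLowerUnitriangular (L * N) :=
  ⟨fun i j hij => hL.isLowerTriangular.mul hN.isLowerTriangular hij, fun i => by
    rw [hL.isLowerTriangular.mul_apply_self hN.isLowerTriangular, hL.2, hN.2, one_mul]⟩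

theorem inv (hL : IsLowerUnitriangular L) : IsLowerUnitriangular L⁻¹ := by
  have hdet : IsUnit L.det := hL.det_eq_one ▸ isUnit_one
  have := L.invertibleOfIsUnitDet hdet
  have hinv : L⁻¹.IsLowerTriangular :=
    Matrix.blockTriangular_inv_of_blockTriangular hL.isLowerTriangular
  refine ⟨fun i j hij => hinv hij, fun i => ?_⟩
  have h := congrFun (congrFun (L.mul_nonsing_inv hdet) i) i
  rwa [hL.isLowerTriangular.mul_apply_self hinv, hL.2, one_mul, Matrix.one_apply_eq] at h

theorem mul_apply {p : ℕ} (hN : IsLowerUnitriangular N) (B : Matrix (Fin p) (Fin m) ℝ)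
    (r : Fin p) (j : Fin m) : (B * N) r j = B r j + ∑ k ∈ Ioi j, B r k * N k j := by
  rw [Matrix.mul_apply, ← sum_filter_of_ne (p := fun k => j ≤ k), filter_le_eq_Ici,
    ← Ioi_insert, sum_insert (by simp), hN.2, mul_one]
  intro k _ hk
  by_contra! hkj
  exact hk (by rw [hN.1 k j hkj, mul_zero])

end IsLowerUnitriangular

namespace IsCanonicalFormWith

variable {p m : ℕ} {A B : Matrix (Fin p) (Fin m) ℝ} {c c' : Fin p → Fin m}

theorem apply_pivot_of_lt (hc : IsCanonicalFormWith A c) {i r : Fin p} (h : i < r) :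
    A r (c i) = 0 := by
  rcases lt_trichotomy (c i) (c r) with hlt | heq | hgt
  · exact (hc.2 r).2.2 (c i) hlt
  · exact absurd (hc.1 heq) h.ne
  · exact (hc.2 r).2.1 (c i) hgt fun k hrk hik => (h.trans hrk).ne (hc.1 hik)

theorem apply_of_notMem_range (hc : IsCanonicalFormWith A c) {j : Fin m}
    (hj : j ∉ Set.range c) (r : Fin p) : A r j = 0 := by
  rcases lt_trichotomy j (c r) with hlt | rfl | hgt
  · exact (hc.2 r).2.2 j hlt
  · exact absurd ⟨r, rfl⟩ hj
  · exact (hc.2 r).2.1 j hgt fun k _ hk => hj ⟨k, hk.symm⟩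

theorem pivot_eq_of_col_eq (hA : IsCanonicalFormWith A c) (hB : IsCanonicalFormWith B c')
    {k : Fin p} (hcol : ∀ r, A r (c' k) = B r (c' k)) : c k = c' k := by
  have hpiv : c' k ∈ Set.range c := by
    by_contra hno
    exact (hB.2 k).1 (hcol k ▸ hA.apply_of_notMem_range hno k)
  obtain ⟨s, hs⟩ := hpiv
  rcases lt_trichotomy s k with hlt | rfl | hgt
  · exact absurd (hcol k ▸ hs ▸ hA.apply_pivot_of_lt hlt) (hB.2 k).1
  · exact hs
  · exact absurd (hs ▸ (hcol s).symm ▸ hB.apply_pivot_of_lt hgt) (hA.2 s).1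

variable {N : Matrix (Fin m) (Fin m) ℝ}

theorem apply_pivot_eq_zero_of_eq_mul (hA : IsCanonicalFormWith A c)
    (hB : IsCanonicalFormWith B c') (hN : IsLowerUnitriangular N) (hAB : A = B * N)
    {j : Fin m} (hcols : ∀ d, j < d → ∀ r, A r d = B r d) (s : Fin p) (hjs : j < c' s) :
    N (c' s) j = 0 := by
  induction s using WellFoundedGT.induction with
  | ind s ihs =>
  have hexp : A s j = B s (c' s) * N (c' s) j := by
    rw [hAB, hN.mul_apply, (hB.2 s).2.2 j hjs, zero_add]
    refine sum_eq_single_of_mem _ (mem_Ioi.2 hjs) fun k hk hks => ?_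
    obtain ⟨t, rfl⟩ | hk' := em (k ∈ Set.range c')
    · rcases lt_trichotomy t s with hts | rfl | hst
      · rw [hB.apply_pivot_of_lt hts, zero_mul]
      · exact absurd rfl hks
      · rw [ihs t hst (mem_Ioi.1 hk), mul_zero]
    · rw [hB.apply_of_notMem_range hk', zero_mul]
  have hA0 : A s j = 0 :=
    (hA.2 s).2.2 j (hA.pivot_eq_of_col_eq hB (hcols (c' s) hjs) ▸ hjs)
  exact (mul_eq_zero.1 (hexp ▸ hA0)).resolve_left (hB.2 s).1

theorem eq_of_eq_mul (hA : IsCanonicalFormWith A c) (hB : IsCanonicalFormWith B c')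
    (hN : IsLowerUnitriangular N) (hAB : A = B * N) : A = B := by
  ext r j
  induction j using WellFoundedGT.induction generalizing r with
  | ind j ih =>
  rw [hAB, hN.mul_apply, add_eq_left]
  refine sum_eq_zero fun k hk => ?_
  obtain ⟨t, rfl⟩ | hk' := em (k ∈ Set.range c')
  · rw [hA.apply_pivot_eq_zero_of_eq_mul hB hN hAB ih t (mem_Ioi.1 hk), mul_zero]
  · rw [hB.apply_of_notMem_range hk', zero_mul]

end IsCanonicalFormWith

theorem canonical_UL_decomposition_unique_general {p m : ℕ}
    (Q : Matrix (Fin p) (Fin m) ℝ)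
    (L L' : Matrix (Fin m) (Fin m) ℝ)
    (hL : IsLowerUnitriangular L) (hL' : IsLowerUnitriangular L')
    (h : IsCanonicalForm (Q * L)) (h' : IsCanonicalForm (Q * L')) :
    Q * L = Q * L' := by
  obtain ⟨c, hc⟩ := h
  obtain ⟨c', hc'⟩ := h'
  refine hc.eq_of_eq_mul hc' (hL'.inv.mul hL) ?_
  rw [← Matrix.mul_assoc, Matrix.mul_assoc Q,
    Matrix.mul_nonsing_inv _ (hL'.det_eq_one ▸ isUnit_one), Matrix.mul_one]

/-- Uniqueness part of the canonical UL-decomposition: if `Q` has full row rank and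
`L`, `L̃` are lower unitriangular with both `Q * L` and `Q * L̃` in canonical form,
then `Q * L = Q * L̃`. -/
theorem canonical_UL_decomposition_unique {p m : ℕ} (hp : 1 ≤ p) (hm : 1 ≤ m)
    (Q : Matrix (Fin p) (Fin m) ℝ) (hQ : Q.rank = p)
    (L L' : Matrix (Fin m) (Fin m) ℝ)
    (hL : IsLowerUnitriangular L) (hL' : IsLowerUnitriangular L')
    (h : IsCanonicalForm (Q * L)) (h' : IsCanonicalForm (Q * L')) :
    Q * L = Q * L' :=
  canonical_UL_decomposition_unique_general Q L L' hL hL' h h'
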